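/- arXiv:2406.16759 — 3 statements merged into one kernel-verified Lean document; each statement's English description precedes it below -/
import Mathlib

section
/- Let n ≥ 1 and let a_1,…,a_n, b_1,…,b_n ∈ (0,1] with ε > 0 such that min(a_i, b_i) > ε for all i. Suppose |a_i - b_i| ≤ δ for all i, where δ < min_i min(a_i, b_i). Then the geometric means A = (∏ a_i)^{1/n} and B = (∏ b_i)^{1/n} satisfy |A - B| ≤ (7/4)·(A/ε)·δ. -/
/-!
Since `a i ≥ ε`, an additive perturbation of size `δ` is a multiplicative one of size
`1 + δ / ε`: `b i ≤ a i + δ ≤ (1 + δ / ε) * a i`. Multiplicative bounds survive products and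
`n`-th roots, so `B ≤ (1 + δ / ε) * A` and symmetrically `A ≤ (1 + δ / ε) * B`, which gives
`|A - B| ≤ (δ / ε) * A`, better than the claim by the factor `7 / 4`.
-/

lemma add_le_one_add_div_mul {x y ε : ℝ} (hε : 0 < ε) (hεx : ε ≤ x) (hy : 0 ≤ y) :
    x + y ≤ (1 + y / ε) * x := by
  have hx : 1 ≤ x / ε := (one_le_div hε).mpr hεx
  calc x + y ≤ x + y * (x / ε) := by nlinarith
    _ = (1 + y / ε) * x := by ring

lemma rpow_one_div_le_mul_of_le_pow_mul {n : ℕ} (hn : n ≠ 0) {c P Q : ℝ} (hc : 0 ≤ c)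
    (hP : 0 ≤ P) (hQ : 0 ≤ Q) (h : Q ≤ c ^ n * P) :
    Q ^ ((1 : ℝ) / n) ≤ c * P ^ ((1 : ℝ) / n) :=
  calc Q ^ ((1 : ℝ) / n) ≤ (c ^ n * P) ^ ((1 : ℝ) / n) :=
        Real.rpow_le_rpow hQ h (by positivity)
    _ = c * P ^ ((1 : ℝ) / n) := by
        rw [Real.mul_rpow (by positivity) hP, one_div, Real.pow_rpow_inv_natCast hc hn]

lemma geomMean_le_one_add_div_mul {ι : Type*} [Fintype ι] [Nonempty ι] {x y : ι → ℝ}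
    {ε δ : ℝ} (hε : 0 < ε) (hδ : 0 ≤ δ) (hεx : ∀ i, ε ≤ x i) (hy : ∀ i, 0 ≤ y i)
    (hyx : ∀ i, y i ≤ x i + δ) :
    (∏ i, y i) ^ ((1 : ℝ) / Fintype.card ι) ≤
      (1 + δ / ε) * (∏ i, x i) ^ ((1 : ℝ) / Fintype.card ι) := by
  have hx : ∀ i, 0 ≤ x i := fun i => hε.le.trans (hεx i)
  have hprod : ∏ i, y i ≤ (1 + δ / ε) ^ Fintype.card ι * ∏ i, x i :=
    calc ∏ i, y i ≤ ∏ i, (1 + δ / ε) * x i :=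
          Finset.prod_le_prod (fun i _ => hy i)
            fun i _ => (hyx i).trans (add_le_one_add_div_mul hε (hεx i) hδ)
      _ = (1 + δ / ε) ^ Fintype.card ι * ∏ i, x i := by
          rw [Finset.prod_mul_distrib, Finset.prod_const, Finset.card_univ]
  exact rpow_one_div_le_mul_of_le_pow_mul Fintype.card_ne_zero (by positivity)
    (Finset.prod_nonneg fun i _ => hx i) (Finset.prod_nonneg fun i _ => hy i) hprod

lemma abs_sub_le_mul_of_le_one_add_mul {A B t : ℝ} (ht : 0 ≤ t)
    (hBA : B ≤ (1 + t) * A) (hAB : A ≤ (1 + t) * B) : |A - B| ≤ t * A := by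
  rw [abs_sub_le_iff]
  refine ⟨?_, by linarith⟩
  rcases le_total B A with h | h
  · nlinarith
  · nlinarith

theorem geometric_mean_dev_bound_general (n : ℕ) (hn : 1 ≤ n) (a b : Fin n → ℝ) (ε δ : ℝ)
    (hε : 0 < ε)
    (hmin : ∀ i, ε < min (a i) (b i))
    (hδ : ∀ i, |a i - b i| ≤ δ) :
    |(∏ i, a i) ^ ((1 : ℝ) / n) - (∏ i, b i) ^ ((1 : ℝ) / n)| ≤
      (7 / 4) * ((∏ i, a i) ^ ((1 : ℝ) / n) / ε) * δ := by
  have : Nonempty (Fin n) := ⟨⟨0, hn⟩⟩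
  have hδ0 : 0 ≤ δ := (abs_nonneg _).trans (hδ ⟨0, hn⟩)
  have hεa : ∀ i, ε ≤ a i := fun i => (hmin i).le.trans (min_le_left _ _)
  have hεb : ∀ i, ε ≤ b i := fun i => (hmin i).le.trans (min_le_right _ _)
  have hba : ∀ i, b i ≤ a i + δ := fun i => by linarith [(abs_le.mp (hδ i)).1]
  have hab : ∀ i, a i ≤ b i + δ := fun i => by linarith [(abs_le.mp (hδ i)).2]
  have hBA := geomMean_le_one_add_div_mul hε hδ0 hεa (fun i => hε.le.trans (hεb i)) hba
  have hAB := geomMean_le_one_add_div_mul hε hδ0 hεb (fun i => hε.le.trans (hεa i)) hab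
  rw [Fintype.card_fin] at hBA hAB
  have hA : 0 ≤ (∏ i, a i) ^ ((1 : ℝ) / n) :=
    Real.rpow_nonneg (Finset.prod_nonneg fun i _ => hε.le.trans (hεa i)) _
  calc _ ≤ δ / ε * (∏ i, a i) ^ ((1 : ℝ) / n) :=
        abs_sub_le_mul_of_le_one_add_mul (by positivity) hBA hAB
    _ = ((∏ i, a i) ^ ((1 : ℝ) / n) / ε) * δ := by ring
    _ ≤ (7 / 4) * ((∏ i, a i) ^ ((1 : ℝ) / n) / ε) * δ := by
        nlinarith [mul_nonneg (div_nonneg hA hε.le) hδ0]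

/-- Non-asymptotic bound for geometric means: if `a i, b i ∈ (0,1]`, `min (a i) (b i) > ε > 0`,
`|a i - b i| ≤ δ` for all `i`, and `δ < min_i min (a i) (b i)`, then the geometric means
`A = (∏ a i)^(1/n)` and `B = (∏ b i)^(1/n)` satisfy `|A - B| ≤ (7/4)·(A/ε)·δ`. -/
theorem geometric_mean_dev_bound (n : ℕ) (hn : 1 ≤ n) (a b : Fin n → ℝ) (ε δ : ℝ)
    (hε : 0 < ε)
    (ha : ∀ i, a i ∈ Set.Ioc (0 : ℝ) 1) (hb : ∀ i, b i ∈ Set.Ioc (0 : ℝ) 1)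
    (hmin : ∀ i, ε < min (a i) (b i))
    (hδ : ∀ i, |a i - b i| ≤ δ)
    (hδlt : ∀ i, δ < min (a i) (b i)) :
    |(∏ i, a i) ^ ((1 : ℝ) / n) - (∏ i, b i) ^ ((1 : ℝ) / n)| ≤
      (7 / 4) * ((∏ i, a i) ^ ((1 : ℝ) / n) / ε) * δ :=
  geometric_mean_dev_bound_general n hn a b ε δ hε hmin hδ
end

section
/- Let n ≥ 1 and a_1,…,a_n, b_1,…,b_n ∈ (0,1] with |a_i - b_i| < min(a_i, b_i) for all i. Then |(∏ a_i)^{1/n} - (∏ b_i)^{1/n}| ≤ (7/4)·(∏ a_i)^{1/n}·(1/n)·∑_{i=1}^n |a_i - b_i|/√(a_i b_i). -/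
/-!
Write both geometric means as exponentials of averaged logarithms, `exp A` and `exp B`.
Then `|exp A - exp B| = exp A * |1 - exp (B - A)| ≤ (7/4) exp A |A - B|` as long as `B - A ≤ 1`,
and `|A - B|` is at most the average of `|log aᵢ - log bᵢ| ≤ |aᵢ - bᵢ| / √(aᵢ bᵢ)`, the
inequality between the logarithmic and the geometric mean. The hypothesis
`|aᵢ - bᵢ| < min aᵢ bᵢ ≤ √(aᵢ bᵢ)` keeps each summand, hence `B - A`, below `1`.
-/

open Finset Real

namespace Real

theorem abs_log_sub_log_le_abs_sub_div_sqrt {x y : ℝ} (hx : 0 < x) (hy : 0 < y) :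
    |log x - log y| ≤ |x - y| / √(x * y) := by
  set t := (log x - log y) / 2
  have hsqrt : √(x * y) = exp ((log x + log y) / 2) := by
    rw [exp_half, exp_add, exp_log hx, exp_log hy]
  -- `(x - y) / √(x y) = √(x / y) - √(y / x) = 2 sinh t`, and `|t| ≤ |sinh t|`.
  have hsinh : x - y = 2 * sinh t * √(x * y) := by
    rw [hsqrt, sinh_eq, mul_div_cancel₀ _ two_ne_zero, sub_mul, ← exp_add, ← exp_add]
    nth_rw 1 [← exp_log hx, ← exp_log hy]
    congr 2 <;> ring
  have hpos : 0 < √(x * y) := sqrt_pos.2 (mul_pos hx hy)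
  rw [hsinh, abs_mul, abs_mul, abs_of_pos hpos, mul_div_cancel_right₀ _ hpos.ne', abs_two,
    abs_sinh]
  have ht_le : |t| ≤ sinh |t| := self_le_sinh_iff.2 (abs_nonneg t)
  have hlog : |log x - log y| = 2 * |t| := by
    rw [abs_div, abs_two]; ring
  linarith

theorem abs_one_sub_exp_le {t : ℝ} (ht : t ≤ 1) : |1 - exp t| ≤ 7 / 4 * |t| := by
  rcases le_or_gt 0 t with h | h
  · -- convexity on `[0, 1]` gives `exp t ≤ 1 + (e - 1) t`, and `e - 1 < 7 / 4`
    have hconv := convexOn_exp.2 (Set.mem_univ 0) (Set.mem_univ 1) (sub_nonneg.2 ht) h (by ring)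
    simp only [smul_eq_mul, mul_zero, mul_one, zero_add, exp_zero] at hconv
    have he : exp 1 < 2.7182818286 := exp_one_lt_d9
    rw [abs_of_nonpos (sub_nonpos.2 (one_le_exp h)), abs_of_nonneg h]
    nlinarith
  · rw [abs_of_nonneg (sub_nonneg.2 (exp_le_one_iff.2 h.le)), abs_of_neg h]
    linarith [add_one_le_exp t]

theorem abs_exp_sub_exp_le {x y : ℝ} (h : y - x ≤ 1) :
    |exp x - exp y| ≤ 7 / 4 * exp x * |x - y| := by
  have hfactor : exp x - exp y = exp x * (1 - exp (y - x)) := by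
    rw [mul_sub, ← exp_add]; ring_nf
  rw [hfactor, abs_mul, abs_of_pos (exp_pos x), abs_sub_comm x y, mul_comm _ (exp x), mul_assoc]
  exact mul_le_mul_of_nonneg_left (abs_one_sub_exp_le h) (exp_pos x).le

theorem min_le_sqrt_mul {a b : ℝ} (ha : 0 ≤ a) (hb : 0 ≤ b) : min a b ≤ √(a * b) :=
  le_sqrt_of_sq_le <| by
    rw [sq]; exact mul_le_mul (min_le_left a b) (min_le_right a b) (le_min ha hb) ha

end Real

theorem Finset.prod_rpow_eq_exp_mul_sum_log {ι : Type*} {s : Finset ι} {f : ι → ℝ}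
    (hf : ∀ i ∈ s, 0 < f i) (r : ℝ) :
    (∏ i ∈ s, f i) ^ r = exp (r * ∑ i ∈ s, log (f i)) := by
  rw [rpow_def_of_pos (prod_pos hf), log_prod fun i hi => (hf i hi).ne', mul_comm]

theorem geometric_mean_dev_bound_strong_general (n : ℕ) (a b : Fin n → ℝ)
    (ha : ∀ i, a i ∈ Set.Ioc (0 : ℝ) 1) (hb : ∀ i, b i ∈ Set.Ioc (0 : ℝ) 1)
    (hab : ∀ i, |a i - b i| < min (a i) (b i)) :
    |(∏ i, a i) ^ ((1 : ℝ) / n) - (∏ i, b i) ^ ((1 : ℝ) / n)| ≤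
      (7 / 4) * (∏ i, a i) ^ ((1 : ℝ) / n) *
        ((1 / (n : ℝ)) * ∑ i, |a i - b i| / Real.sqrt (a i * b i)) := by
  set r : ℝ := 1 / n with hr_def
  set c : Fin n → ℝ := fun i => |a i - b i| / √(a i * b i)
  rw [prod_rpow_eq_exp_mul_sum_log (fun i _ => (ha i).1),
    prod_rpow_eq_exp_mul_sum_log (fun i _ => (hb i).1)]
  have hr : 0 ≤ r := by positivity
  have hc_le_one (i : Fin n) : c i ≤ 1 :=
    (div_le_one (sqrt_pos.2 (mul_pos (ha i).1 (hb i).1))).2 <|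
      (hab i).le.trans (min_le_sqrt_mul (ha i).1.le (hb i).1.le)
  have hmean : r * ∑ i, c i ≤ 1 :=
    calc r * ∑ i, c i ≤ r * n := by
          grw [sum_le_sum fun i _ => hc_le_one i]; simp
      _ ≤ 1 := by rw [hr_def, one_div]; exact inv_mul_le_one
  have hlog : |r * ∑ i, log (a i) - r * ∑ i, log (b i)| ≤ r * ∑ i, c i :=
    calc |r * ∑ i, log (a i) - r * ∑ i, log (b i)|
        = r * |∑ i, (log (a i) - log (b i))| := by
          rw [← mul_sub, ← sum_sub_distrib, abs_mul, abs_of_nonneg hr]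
      _ ≤ r * ∑ i, c i := by
          grw [abs_sum_le_sum_abs]
          gcongr with i
          exact abs_log_sub_log_le_abs_sub_div_sqrt (ha i).1 (hb i).1
  calc _ ≤ 7 / 4 * exp (r * ∑ i, log (a i)) * |r * ∑ i, log (a i) - r * ∑ i, log (b i)| :=
        abs_exp_sub_exp_le <| by linarith [neg_abs_le (r * ∑ i, log (a i) - r * ∑ i, log (b i))]
    _ ≤ _ := by gcongr

/-- Strong form of the non-asymptotic bound: for `a i, b i ∈ (0,1]` with
`|a i - b i| < min (a i) (b i)` for all `i`, the deviation of the geometric means is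
controlled by the harmonic-mean-weighted average of the pairwise deviations. -/
theorem geometric_mean_dev_bound_strong (n : ℕ) (hn : 1 ≤ n) (a b : Fin n → ℝ)
    (ha : ∀ i, a i ∈ Set.Ioc (0 : ℝ) 1) (hb : ∀ i, b i ∈ Set.Ioc (0 : ℝ) 1)
    (hab : ∀ i, |a i - b i| < min (a i) (b i)) :
    |(∏ i, a i) ^ ((1 : ℝ) / n) - (∏ i, b i) ^ ((1 : ℝ) / n)| ≤
      (7 / 4) * (∏ i, a i) ^ ((1 : ℝ) / n) *
        ((1 / (n : ℝ)) * ∑ i, |a i - b i| / Real.sqrt (a i * b i)) :=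
  geometric_mean_dev_bound_strong_general n a b ha hb hab
end

section
/- Markov simplicial depth in ℝ: if each Π_{x_{i-1}} is atomless with CDF F_{x_{i-1}}, the Markov depth based on the simplicial depth of the path (x_0,…,x_n) equals (∏_{i=1}^n 2·F_{x_{i-1}}(x_i)·(1 - F_{x_{i-1}}(x_i)))^{1/n}; in particular the one-dimensional simplicial depth of y w.r.t. atomless P with CDF F equals 2·F(y)(1-F(y)). -/
open MeasureTheory

/-- Markov simplicial depth in `ℝ`: the one-dimensional simplicial depth of `y` w.r.t. an
atomless probability measure `P` (probability that `y` lies between two independent draws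
from `P`) equals `2·F(y)·(1-F(y))` where `F y = P (Iic y)`; consequently, if each
transition distribution `κ x` is an atomless probability measure, the Markov depth based
on the simplicial depth of the path `(x_0,…,x_n)` equals
`(∏ i, 2·F_{x_{i-1}}(x_i)·(1 - F_{x_{i-1}}(x_i)))^(1/n)`. -/
theorem markov_simplicial_depth_one_dim (κ : ℝ → Measure ℝ)
    (hprob : ∀ x, IsProbabilityMeasure (κ x))
    (hatomless : ∀ x y : ℝ, κ x {y} = 0) :
    (∀ x y : ℝ, ((κ x).prod (κ x)) {q : ℝ × ℝ | min q.1 q.2 ≤ y ∧ y ≤ max q.1 q.2} =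
        2 * κ x (Set.Iic y) * (1 - κ x (Set.Iic y))) ∧
    ∀ (n : ℕ), 1 ≤ n → ∀ p : Fin (n + 1) → ℝ,
      (∏ i : Fin n,
          ((κ (p i.castSucc)).prod (κ (p i.castSucc)))
            {q : ℝ × ℝ | min q.1 q.2 ≤ p i.succ ∧ p i.succ ≤ max q.1 q.2}) ^ ((1 : ℝ) / n) =
        (∏ i : Fin n,
          2 * κ (p i.castSucc) (Set.Iic (p i.succ)) *
            (1 - κ (p i.castSucc) (Set.Iic (p i.succ)))) ^ ((1 : ℝ) / n) := by
  have key : ∀ x y : ℝ, ((κ x).prod (κ x)) {q : ℝ × ℝ | min q.1 q.2 ≤ y ∧ y ≤ max q.1 q.2} =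
      2 * κ x (Set.Iic y) * (1 - κ x (Set.Iic y)) := by
    intro x y
    have hP := hprob x
    -- the set as a union of two product rectangles
    have hset : {q : ℝ × ℝ | min q.1 q.2 ≤ y ∧ y ≤ max q.1 q.2} =
        (Set.Iic y ×ˢ Set.Ici y) ∪ (Set.Ici y ×ˢ Set.Iic y) := by
      ext ⟨a, b⟩
      simp only [Set.mem_setOf_eq, Set.mem_union, Set.mem_prod, Set.mem_Iic, Set.mem_Ici,
        min_le_iff, le_max_iff]
      rcases le_total a y with h1 | h1 <;> rcases le_total b y with h2 | h2 <;>
        constructor <;> intro h <;> tauto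
    -- the intersection of the two rectangles is null
    have hinter : ((κ x).prod (κ x))
        ((Set.Iic y ×ˢ Set.Ici y) ∩ (Set.Ici y ×ˢ Set.Iic y)) = 0 := by
      have hsub : (Set.Iic y ×ˢ Set.Ici y) ∩ (Set.Ici y ×ˢ Set.Iic y) ⊆
          ({y} : Set ℝ) ×ˢ ({y} : Set ℝ) := by
        rintro ⟨a, b⟩ ⟨⟨h1, h2⟩, h3, h4⟩
        simp only [Set.mem_prod, Set.mem_singleton_iff] at *
        exact ⟨le_antisymm h1 h3, le_antisymm h4 h2⟩
      refine measure_mono_null hsub ?_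
      rw [Measure.prod_prod, hatomless x y, zero_mul]
    have hIio : κ x (Set.Iio y) = κ x (Set.Iic y) := by
      have : Set.Iic y = Set.Iio y ∪ {y} := (Set.Iio_union_right).symm
      rw [this, measure_union (by simp [Set.disjoint_singleton_right]) (measurableSet_singleton y),
        hatomless x y, add_zero]
    have hIci : κ x (Set.Ici y) = 1 - κ x (Set.Iic y) := by
      rw [← Set.compl_Iio, prob_compl_eq_one_sub measurableSet_Iio, hIio]
    have hunion : ((κ x).prod (κ x))
        ((Set.Iic y ×ˢ Set.Ici y) ∪ (Set.Ici y ×ˢ Set.Iic y)) =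
        κ x (Set.Iic y) * (1 - κ x (Set.Iic y)) +
          (1 - κ x (Set.Iic y)) * κ x (Set.Iic y) := by
      have := measure_union_add_inter (μ := (κ x).prod (κ x))
        (Set.Iic y ×ˢ Set.Ici y) (t := Set.Ici y ×ˢ Set.Iic y)
        ((measurableSet_Ici).prod measurableSet_Iic)
      rw [hinter, add_zero] at this
      rw [this, Measure.prod_prod, Measure.prod_prod, hIci]
    rw [hset, hunion]
    set F := κ x (Set.Iic y)
    set G := 1 - F
    ring
  refine ⟨key, ?_⟩
  intro n _ p
  congr 1
  exact Finset.prod_congr rfl fun i _ => key (p i.castSucc) (p i.succ)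
end
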